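/- Let p be a probability measure on ℝ^d with support Ω, and let S ⊆ Ω be a local cluster with diameter D and weight a_S = p(S) > 0, meaning S is closed and bounded and every point of Ω \ S is at distance greater than 2D from conv(S). Then for any ε > 0 and any x with d_{conv(S)}(x) ≤ D/2 - ε, the denoiser satisfies d_{conv(S)}(m_σ(x)) ≤ diam(Ω) · √((1 - a_S)/a_S) · exp(-3Dε/(2σ²)). -/

import Mathlib

open MeasureTheory Metric Set
open scoped ENNReal NNReal

/-- The (topological) support of a measure on a metric space: points all of whose balls
have positive measure. -/
def msupport {E : Type*} [MeasurableSpace E] [PseudoMetricSpace E] (p : Measure E) :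
    Set E := {y | ∀ r : ℝ, 0 < r → 0 < p (Metric.ball y r)}



lemma msupport_isClosed {E : Type*} [MeasurableSpace E] [PseudoMetricSpace E] (p : Measure E) :
    IsClosed (msupport p) := by
  rw [← isOpen_compl_iff, Metric.isOpen_iff]
  intro z hz
  rw [Set.mem_compl_iff] at hz
  simp only [msupport, Set.mem_setOf_eq] at hz
  push_neg at hz
  obtain ⟨r, hr0, hr⟩ := hz
  refine ⟨r / 2, by positivity, fun u hu => ?_⟩
  rw [Set.mem_compl_iff]
  simp only [msupport, Set.mem_setOf_eq]
  push_neg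
  refine ⟨r / 2, by positivity, ?_⟩
  have hsub : Metric.ball u (r / 2) ⊆ Metric.ball z r := by
    apply Metric.ball_subset_ball'
    have := Metric.mem_ball.mp hu
    linarith
  calc p (Metric.ball u (r / 2)) ≤ p (Metric.ball z r) := measure_mono hsub
  _ ≤ 0 := hr

lemma msupport_compl_null {E : Type*} [MeasurableSpace E] [PseudoMetricSpace E]
    [SecondCountableTopology E] (p : Measure E) : p (msupport p)ᶜ = 0 := by
  apply measure_null_of_locally_null
  intro y hy
  rw [Set.mem_compl_iff] at hy
  simp only [msupport, Set.mem_setOf_eq] at hy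
  push_neg at hy
  obtain ⟨r, hr0, hr⟩ := hy
  exact ⟨Metric.ball y r, mem_nhdsWithin_of_mem_nhds (Metric.ball_mem_nhds y hr0),
    le_antisymm hr zero_le⟩

lemma weighted_avg_mem {E : Type*} [NormedAddCommGroup E] [NormedSpace ℝ E] [CompleteSpace E]
    [MeasurableSpace E]
    (μ : Measure E) [IsFiniteMeasure μ] {K : Set E} (hKc : Convex ℝ K) (hKcl : IsClosed K)
    {w : E → ℝ} (hwm : Measurable w) (hw0 : ∀ y, 0 ≤ w y)
    (hintw : Integrable w μ) (hinty : Integrable (fun y => w y • y) μ)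
    (hae : ∀ᵐ y ∂μ, y ∈ K) (hpos : 0 < ∫ y, w y ∂μ) :
    (∫ y, w y ∂μ)⁻¹ • ∫ y, w y • y ∂μ ∈ K := by
  set f : E → ℝ≥0 := fun y => Real.toNNReal (w y) with hf
  have hfm : Measurable f := measurable_real_toNNReal.comp hwm
  set ν := μ.withDensity (fun y => (f y : ℝ≥0∞)) with hν
  have hνuniv : ν Set.univ = ENNReal.ofReal (∫ y, w y ∂μ) := by
    rw [hν, withDensity_apply _ MeasurableSet.univ, Measure.restrict_univ,
      ofReal_integral_eq_lintegral_ofReal hintw (Filter.Eventually.of_forall hw0)]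
    rfl
  have hfin : IsFiniteMeasure ν := ⟨by rw [hνuniv]; exact ENNReal.ofReal_lt_top⟩
  have hν0 : ν ≠ 0 := by
    intro h
    have h2 : ν Set.univ = 0 := by simp [h]
    rw [hνuniv] at h2
    exact (ENNReal.ofReal_pos.mpr hpos).ne' h2
  have : NeZero ν := ⟨hν0⟩
  have hsmul : ∀ y : E, f y • y = w y • y := fun y => by
    rw [NNReal.smul_def, Real.coe_toNNReal _ (hw0 y)]
  have hIν : Integrable (fun y => y) ν := by
    rw [hν, integrable_withDensity_iff_integrable_smul hfm]
    simpa only [hsmul] using hinty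
  have haeν : ∀ᵐ y ∂ν, y ∈ K :=
    hae.filter_mono ((withDensity_absolutelyContinuous μ _).ae_le)
  have hmem := hKc.average_mem hKcl haeν hIν
  rw [average_eq, measureReal_def, hνuniv, ENNReal.toReal_ofReal hpos.le] at hmem
  rw [hν, integral_withDensity_eq_integral_smul hfm] at hmem
  simpa only [hsmul] using hmem

theorem stmt17_aux {d : ℕ} (p : Measure (EuclideanSpace ℝ (Fin d))) [IsProbabilityMeasure p]
    (hΩbd : Bornology.IsBounded (msupport p))
    (S : Set (EuclideanSpace ℝ (Fin d))) (hScl : IsClosed S)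
    (hSsub : S ⊆ msupport p)
    (haS : 0 < (p S).toReal)
    (w : EuclideanSpace ℝ (Fin d) → ℝ) (hwc : Continuous w)
    (hw0 : ∀ y, 0 ≤ w y) (hw1 : ∀ y, w y ≤ 1)
    {c₁ c₂ : ℝ} (hc₁ : 0 < c₁) (hc₂ : 0 ≤ c₂)
    (hwS : ∀ y ∈ S, c₁ ≤ w y)
    (hwO : ∀ y ∈ msupport p, y ∉ S → w y ≤ c₂) :
    Metric.infDist ((∫ y, w y ∂p)⁻¹ • ∫ y, w y • y ∂p) (convexHull ℝ S) ≤
      Metric.diam (msupport p) *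
        Real.sqrt ((c₂ * (1 - (p S).toReal)) / (c₁ * (p S).toReal)) := by
  have haeΩ : ∀ᵐ y ∂p, y ∈ msupport p := by
    rw [ae_iff]
    exact msupport_compl_null p
  have hSm : MeasurableSet S := hScl.measurableSet
  have hwm := hwc.measurable
  obtain ⟨C, hC⟩ := isBounded_iff_forall_norm_le.mp hΩbd
  have hintw : Integrable w p := by
    refine Integrable.mono' (integrable_const 1) hwc.aestronglyMeasurable
      (Filter.Eventually.of_forall fun y => ?_)
    rw [Real.norm_eq_abs, abs_of_nonneg (hw0 y)]; exact hw1 y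
  have hintwy : Integrable (fun y => w y • y) p := by
    refine Integrable.mono' (integrable_const (max C 0))
      (hwc.smul continuous_id).aestronglyMeasurable ?_
    filter_upwards [haeΩ] with y hy
    calc ‖w y • y‖ = w y * ‖y‖ := by rw [norm_smul, Real.norm_eq_abs, abs_of_nonneg (hw0 y)]
    _ ≤ 1 * max C 0 := mul_le_mul (hw1 y) ((hC y hy).trans (le_max_left _ _)) (norm_nonneg _)
        zero_le_one
    _ = max C 0 := one_mul _
  set a := (p S).toReal with ha
  have ha1 : a ≤ 1 := by
    calc a ≤ (1 : ℝ≥0∞).toReal := ENNReal.toReal_mono ENNReal.one_ne_top prob_le_one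
    _ = 1 := by simp
  set ZS := ∫ y in S, w y ∂p with hZS
  set Zc := ∫ y in Sᶜ, w y ∂p with hZc
  set IS := ∫ y in S, w y • y ∂p with hIS
  set Ic := ∫ y in Sᶜ, w y • y ∂p with hIc
  have hZsplit : ZS + Zc = ∫ y, w y ∂p := integral_add_compl hSm hintw
  have hIsplit : IS + Ic = ∫ y, w y • y ∂p := integral_add_compl hSm hintwy
  have hZSlb : c₁ * a ≤ ZS :=
    setIntegral_ge_of_const_le_real hSm (measure_ne_top p S) hwS hintw.integrableOn
  have hZSpos : 0 < ZS := lt_of_lt_of_le (mul_pos hc₁ haS) hZSlb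
  have hZc0 : 0 ≤ Zc := setIntegral_nonneg hSm.compl fun y _ => hw0 y
  have hZpos : 0 < ∫ y, w y ∂p := by rw [← hZsplit]; linarith
  have hZcub : Zc ≤ c₂ * (1 - a) := by
    have hae2 : ∀ᵐ y ∂(p.restrict Sᶜ), w y ≤ c₂ := by
      filter_upwards [ae_restrict_mem hSm.compl, ae_restrict_of_ae haeΩ] with y hy1 hy2
      exact hwO y hy2 hy1
    calc Zc ≤ ∫ _ in Sᶜ, c₂ ∂p :=
        integral_mono_ae hintw.integrableOn (integrable_const c₂) hae2
    _ = (p Sᶜ).toReal * c₂ := by rw [setIntegral_const, smul_eq_mul, measureReal_def]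
    _ = (1 - a) * c₂ := by
        rw [prob_compl_eq_one_sub hSm, ENNReal.toReal_sub_of_le prob_le_one ENNReal.one_ne_top]
        simp [ha]
    _ = c₂ * (1 - a) := mul_comm _ _
  have hKΩconv : Convex ℝ (closure (convexHull ℝ (msupport p))) :=
    (convex_convexHull ℝ _).closure
  have hKSconv : Convex ℝ (closure (convexHull ℝ S)) := (convex_convexHull ℝ _).closure
  have hmS : ZS⁻¹ • IS ∈ closure (convexHull ℝ S) := by
    refine weighted_avg_mem (p.restrict S) hKSconv isClosed_closure hwm hw0
      hintw.restrict hintwy.restrict ?_ hZSpos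
    filter_upwards [ae_restrict_mem hSm] with y hy
    exact subset_closure (subset_convexHull ℝ S hy)
  have hm : (∫ y, w y ∂p)⁻¹ • ∫ y, w y • y ∂p ∈ closure (convexHull ℝ (msupport p)) := by
    refine weighted_avg_mem p hKΩconv isClosed_closure hwm hw0 hintw hintwy ?_ hZpos
    filter_upwards [haeΩ] with y hy
    exact subset_closure (subset_convexHull ℝ _ hy)
  have hmSΩ : ZS⁻¹ • IS ∈ closure (convexHull ℝ (msupport p)) :=
    closure_mono (convexHull_mono hSsub) hmS
  set m := (∫ y, w y ∂p)⁻¹ • ∫ y, w y • y ∂p with hm'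
  set mS := ZS⁻¹ • IS with hmS'
  have hΩhullbd : Bornology.IsBounded (closure (convexHull ℝ (msupport p))) :=
    (isBounded_convexHull.mpr hΩbd).closure
  have hdiamΩ : Metric.diam (closure (convexHull ℝ (msupport p))) = Metric.diam (msupport p) := by
    rw [Metric.diam_closure, convexHull_diam]
  have hDΩ0 : 0 ≤ Metric.diam (msupport p) := Metric.diam_nonneg
  have hb1 : dist m mS ≤ Metric.diam (msupport p) := by
    rw [← hdiamΩ]; exact Metric.dist_le_diam_of_mem hΩhullbd hm hmSΩ
  have hid : m - mS = (∫ y, w y ∂p)⁻¹ • (Ic - Zc • mS) := by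
    have h1 : ZS ≠ 0 := ne_of_gt hZSpos
    have h2 : ZS + Zc ≠ 0 := by rw [hZsplit]; exact ne_of_gt hZpos
    rw [hm', hmS', ← hIsplit, ← hZsplit]
    match_scalars
    · field_simp; ring
    · field_simp
  have hnorm : ‖Ic - Zc • mS‖ ≤ Zc * Metric.diam (msupport p) := by
    have heq : Ic - Zc • mS = ∫ y in Sᶜ, w y • (y - mS) ∂p := by
      have h3 : ∫ y in Sᶜ, w y • (y - mS) ∂p
          = (∫ y in Sᶜ, w y • y ∂p) - ∫ y in Sᶜ, w y • mS ∂p := by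
        rw [← integral_sub hintwy.restrict (hintw.restrict.smul_const mS)]
        simp [smul_sub]
      rw [h3, integral_smul_const, hIc, hZc]
    rw [heq]
    calc ‖∫ y in Sᶜ, w y • (y - mS) ∂p‖
        ≤ ∫ y in Sᶜ, w y * Metric.diam (msupport p) ∂p := by
          refine norm_integral_le_of_norm_le (hintw.restrict.mul_const _) ?_
          filter_upwards [ae_restrict_of_ae haeΩ] with y hy
          rw [norm_smul, Real.norm_eq_abs, abs_of_nonneg (hw0 y)]
          refine mul_le_mul_of_nonneg_left ?_ (hw0 y)
          have hyK : y ∈ closure (convexHull ℝ (msupport p)) :=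
            subset_closure (subset_convexHull ℝ _ hy)
          calc ‖y - mS‖ = dist y mS := (dist_eq_norm _ _).symm
          _ ≤ Metric.diam (closure (convexHull ℝ (msupport p))) :=
              Metric.dist_le_diam_of_mem hΩhullbd hyK hmSΩ
          _ = _ := hdiamΩ
    _ = Zc * Metric.diam (msupport p) := by rw [integral_mul_const]
  have hb2 : dist m mS ≤ ((c₂ * (1 - a)) / (c₁ * a)) * Metric.diam (msupport p) := by
    rw [dist_eq_norm, hid, norm_smul, Real.norm_eq_abs, abs_of_nonneg (inv_nonneg.mpr hZpos.le)]
    calc (∫ y, w y ∂p)⁻¹ * ‖Ic - Zc • mS‖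
        ≤ (∫ y, w y ∂p)⁻¹ * (Zc * Metric.diam (msupport p)) :=
          mul_le_mul_of_nonneg_left hnorm (inv_nonneg.mpr hZpos.le)
    _ ≤ ZS⁻¹ * (Zc * Metric.diam (msupport p)) := by
        refine mul_le_mul_of_nonneg_right ?_ (mul_nonneg hZc0 hDΩ0)
        refine inv_anti₀ hZSpos ?_
        rw [← hZsplit]; linarith
    _ = (Zc / ZS) * Metric.diam (msupport p) := by rw [← mul_assoc, inv_mul_eq_div]
    _ ≤ ((c₂ * (1 - a)) / (c₁ * a)) * Metric.diam (msupport p) := by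
        refine mul_le_mul_of_nonneg_right ?_ hDΩ0
        exact div_le_div₀ (mul_nonneg hc₂ (by linarith)) hZcub (mul_pos hc₁ haS) hZSlb
  have hin : Metric.infDist m (convexHull ℝ S) ≤ dist m mS := by
    rw [← Metric.infDist_closure]
    exact Metric.infDist_le_dist_of_mem hmS
  set R := (c₂ * (1 - a)) / (c₁ * a) with hR
  have hR0 : 0 ≤ R := div_nonneg (mul_nonneg hc₂ (by linarith)) (mul_pos hc₁ haS).le
  rcases le_total R 1 with hle | hge
  · have hs1 : Real.sqrt R ≤ 1 := Real.sqrt_le_one.mpr hle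
    have hRs : R ≤ Real.sqrt R := by
      nlinarith [Real.sq_sqrt hR0, Real.sqrt_nonneg R]
    calc Metric.infDist m (convexHull ℝ S) ≤ dist m mS := hin
    _ ≤ R * Metric.diam (msupport p) := hb2
    _ ≤ Real.sqrt R * Metric.diam (msupport p) := mul_le_mul_of_nonneg_right hRs hDΩ0
    _ = Metric.diam (msupport p) * Real.sqrt R := mul_comm _ _
  · have h1s : 1 ≤ Real.sqrt R := Real.one_le_sqrt.mpr hge
    calc Metric.infDist m (convexHull ℝ S) ≤ dist m mS := hin
    _ ≤ Metric.diam (msupport p) := hb1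
    _ = Metric.diam (msupport p) * 1 := (mul_one _).symm
    _ ≤ Metric.diam (msupport p) * Real.sqrt R := by
        exact mul_le_mul_of_nonneg_left h1s hDΩ0


/-- Let `p` be a probability measure on `ℝ^d` with (bounded) support `Ω`, and
let `S ⊆ Ω` be a local cluster of diameter `D = diam S` and weight `a_S = p(S) > 0`:
`S` is closed and bounded, and every point of `Ω \ S` is at distance greater than `2D`
from `conv(S)`.  Then for every `ε > 0` and every `x` with `d_{conv(S)}(x) ≤ D/2 - ε`, the
denoiser satisfies
`d_{conv(S)}(m_σ(x)) ≤ diam(Ω) √((1 - a_S)/a_S) e^{-3Dε/(2σ²)}`. -/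
theorem stmt17 {d : ℕ} (p : Measure (EuclideanSpace ℝ (Fin d))) [IsProbabilityMeasure p]
    (hΩbd : Bornology.IsBounded (msupport p))
    (S : Set (EuclideanSpace ℝ (Fin d))) (hScl : IsClosed S)
    (hSbd : Bornology.IsBounded S) (hSsub : S ⊆ msupport p)
    (hsep : ∀ y ∈ msupport p \ S, 2 * Metric.diam S < Metric.infDist y (convexHull ℝ S))
    (haS : 0 < (p S).toReal)
    (σ ε : ℝ) (hσ : 0 < σ) (hε : 0 < ε)
    (x : EuclideanSpace ℝ (Fin d))
    (hx : Metric.infDist x (convexHull ℝ S) ≤ Metric.diam S / 2 - ε) :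
    Metric.infDist
        ((∫ y, Real.exp (-‖x - y‖ ^ 2 / (2 * σ ^ 2)) ∂p)⁻¹ •
          ∫ y, Real.exp (-‖x - y‖ ^ 2 / (2 * σ ^ 2)) • y ∂p)
        (convexHull ℝ S) ≤
      Metric.diam (msupport p) * Real.sqrt ((1 - (p S).toReal) / (p S).toReal) *
        Real.exp (-(3 * Metric.diam S * ε) / (2 * σ ^ 2)) := by
  have hSne : S.Nonempty := by
    rcases Set.eq_empty_or_nonempty S with h | h
    · rw [h] at haS; simp at haS
    · exact h
  set D := Metric.diam S with hD
  have hD0 : 0 ≤ D := Metric.diam_nonneg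
  have hDε : 0 ≤ D / 2 - ε := le_trans Metric.infDist_nonneg hx
  have h2σ : (0:ℝ) < 2 * σ ^ 2 := by positivity
  set L₁ := 3 * D / 2 - ε with hL₁
  set L₂ := 3 * D / 2 + ε with hL₂
  have hL₁0 : 0 ≤ L₁ := by rw [hL₁]; linarith
  have hL₂0 : 0 ≤ L₂ := by rw [hL₂]; linarith
  set w : EuclideanSpace ℝ (Fin d) → ℝ := fun y => Real.exp (-‖x - y‖ ^ 2 / (2 * σ ^ 2))
    with hwdef
  have hw0 : ∀ y, 0 ≤ w y := fun y => (Real.exp_pos _).le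
  have hw1 : ∀ y, w y ≤ 1 := fun y => by
    rw [hwdef]
    refine Real.exp_le_one_iff.mpr ?_
    refine div_nonpos_iff.mpr (Or.inr ⟨neg_nonpos.mpr (by positivity), h2σ.le⟩)
  have hwc : Continuous w := by
    rw [hwdef]
    exact Real.continuous_exp.comp
      ((((continuous_const.sub continuous_id).norm.pow 2).neg).div_const _)
  -- distance estimates
  have hcpt : IsCompact (closure (convexHull ℝ S)) :=
    Metric.isCompact_of_isClosed_isBounded isClosed_closure
      ((isBounded_convexHull.mpr hSbd).closure)
  have hKne : (closure (convexHull ℝ S)).Nonempty :=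
    ⟨hSne.choose, subset_closure (subset_convexHull ℝ S hSne.choose_spec)⟩
  obtain ⟨z, hzK, hzd⟩ := hcpt.exists_infDist_eq_dist hKne x
  rw [Metric.infDist_closure] at hzd
  have hwS : ∀ y ∈ S, Real.exp (-L₁ ^ 2 / (2 * σ ^ 2)) ≤ w y := by
    intro y hy
    have h2 : dist z y ≤ D := by
      have h4 := Metric.dist_le_diam_of_mem ((isBounded_convexHull.mpr hSbd).closure) hzK
        (subset_closure (subset_convexHull ℝ S hy))
      rwa [Metric.diam_closure, convexHull_diam] at h4
    have h1 : dist x y ≤ L₁ := by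
      calc dist x y ≤ dist x z + dist z y := dist_triangle _ _ _
      _ ≤ (D / 2 - ε) + D := add_le_add (hzd ▸ hx) h2
      _ = L₁ := by rw [hL₁]; ring
    have h3 : ‖x - y‖ ^ 2 ≤ L₁ ^ 2 := by
      rw [← dist_eq_norm]
      exact pow_le_pow_left₀ dist_nonneg h1 2
    rw [hwdef]
    exact Real.exp_le_exp.mpr ((div_le_div_iff_of_pos_right h2σ).mpr (neg_le_neg h3))
  have hwO : ∀ y ∈ msupport p, y ∉ S → w y ≤ Real.exp (-L₂ ^ 2 / (2 * σ ^ 2)) := by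
    intro y hyΩ hyS
    have hsep' := hsep y ⟨hyΩ, hyS⟩
    have h1 : Metric.infDist y (convexHull ℝ S)
        ≤ Metric.infDist x (convexHull ℝ S) + dist y x :=
      Metric.infDist_le_infDist_add_dist
    have h2 : L₂ ≤ dist x y := by
      rw [dist_comm]
      rw [hL₂]
      linarith
    have h3 : L₂ ^ 2 ≤ ‖x - y‖ ^ 2 := by
      rw [← dist_eq_norm]
      exact pow_le_pow_left₀ hL₂0 h2 2
    rw [hwdef]
    exact Real.exp_le_exp.mpr ((div_le_div_iff_of_pos_right h2σ).mpr (neg_le_neg h3))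
  have key := stmt17_aux p hΩbd S hScl hSsub haS w hwc hw0 hw1
    (Real.exp_pos (-L₁ ^ 2 / (2 * σ ^ 2))) (Real.exp_pos (-L₂ ^ 2 / (2 * σ ^ 2))).le hwS hwO
  set a := (p S).toReal with ha
  have ha1 : a ≤ 1 := by
    calc a ≤ (1 : ℝ≥0∞).toReal := ENNReal.toReal_mono ENNReal.one_ne_top prob_le_one
    _ = 1 := by simp
  have hc : (Real.exp (-L₂ ^ 2 / (2 * σ ^ 2)) * (1 - a)) /
      (Real.exp (-L₁ ^ 2 / (2 * σ ^ 2)) * a)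
      = ((1 - a) / a) * (Real.exp (-(3 * D * ε) / (2 * σ ^ 2))) ^ 2 := by
    have hexp : Real.exp (-L₂ ^ 2 / (2 * σ ^ 2)) / Real.exp (-L₁ ^ 2 / (2 * σ ^ 2))
        = (Real.exp (-(3 * D * ε) / (2 * σ ^ 2))) ^ 2 := by
      have hsq : ∀ u : ℝ, Real.exp u ^ 2 = Real.exp (u + u) := fun u => by
        rw [Real.exp_add]; ring
      have hne : (2:ℝ) * σ ^ 2 ≠ 0 := h2σ.ne'
      rw [← Real.exp_sub, hsq]
      congr 1
      rw [hL₁, hL₂]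
      field_simp
      ring
    rw [mul_div_mul_comm, hexp, mul_comm]
  calc Metric.infDist _ (convexHull ℝ S)
      ≤ Metric.diam (msupport p) *
        Real.sqrt ((Real.exp (-L₂ ^ 2 / (2 * σ ^ 2)) * (1 - a)) /
          (Real.exp (-L₁ ^ 2 / (2 * σ ^ 2)) * a)) := key
  _ = Metric.diam (msupport p) * Real.sqrt ((1 - a) / a) *
      Real.exp (-(3 * D * ε) / (2 * σ ^ 2)) := by
      rw [hc, Real.sqrt_mul (div_nonneg (by linarith) haS.le),
        Real.sqrt_sq (Real.exp_pos _).le, ← mul_assoc]
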